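/- For f : {-1,1}^n → {-1,1} with p-smoothed version f̃ and any coordinate i: E_x[|f̃(x) − f̃(x^{∼i})|] ≤ sqrt(4·Score_i(f,p)/p), where x is uniform and x^{∼i} is x with coordinate i rerandomized. -/

import Mathlib

open Finset

attribute [local instance] Classical.propDecidable

namespace DTR

noncomputable section

/-- ±1 real value of a Boolean. -/
def toR (b : Bool) : ℝ := if b then 1 else -1

/-- Average (expectation under the uniform distribution) of a real-valued
function on `{-1,1}^n` (encoded as `Fin n → Bool`). -/
def avg (n : ℕ) (g : (Fin n → Bool) → ℝ) : ℝ := (∑ x : Fin n → Bool, g x) / 2 ^ n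

/-- Mean `E[f]` of a ±1-valued Boolean function. -/
def mean (n : ℕ) (f : (Fin n → Bool) → Bool) : ℝ := avg n fun x => toR (f x)

/-- Sign of a real number, as ±1 (with sign(0) = 1). -/
def sgn (e : ℝ) : ℝ := if 0 ≤ e then 1 else -1

/-- Normalized Hamming distance `Pr_x[f(x) ≠ g(x)]` under the uniform distribution. -/
def distB (n : ℕ) (f g : (Fin n → Bool) → Bool) : ℝ :=
  avg n fun x => if f x = g x then 0 else 1

/-- The `p`-noisy copy of `x` determined by the rerandomization pattern `r`
(coordinates where `r i = true` are rerandomized) and fresh bits `z`. -/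
def noisy (n : ℕ) (x r z : Fin n → Bool) : Fin n → Bool := fun i => if r i then z i else x i

/-- Probability of the rerandomization pattern `r` at noise rate `p`. -/
def wt (n : ℕ) (p : ℝ) (r : Fin n → Bool) : ℝ := ∏ i : Fin n, (if r i then p else 1 - p)

/-- Noise sensitivity `NS_p(f) = Pr[f(x) ≠ f(y)]`, `x` uniform, `y` a `p`-noisy copy of `x`. -/
def NS (n : ℕ) (p : ℝ) (f : (Fin n → Bool) → Bool) : ℝ :=
  (∑ x : Fin n → Bool, ∑ r : Fin n → Bool, ∑ z : Fin n → Bool,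
      wt n p r * (if f x = f (noisy n x r z) then 0 else 1)) / (2 ^ n * 2 ^ n)

/-- Restriction `f_{x_i = b}` of `f`, fixing coordinate `i` to `b`. -/
def restr (n : ℕ) (f : (Fin n → Bool) → Bool) (i : Fin n) (b : Bool) :
    (Fin n → Bool) → Bool := fun x => f (Function.update x i b)

/-- `Score_i(f,p) = NS_p(f) − E_b[NS_p(f_{x_i=b})]`. -/
def score (n : ℕ) (p : ℝ) (f : (Fin n → Bool) → Bool) (i : Fin n) : ℝ :=
  NS n p f - (NS n p (restr n f i true) + NS n p (restr n f i false)) / 2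

/-- Discrete derivative `D_i g(x) = (g(x^{i=1}) − g(x^{i=-1}))/2` of a real-valued function. -/
def Dder (n : ℕ) (g : (Fin n → Bool) → ℝ) (i : Fin n) (x : Fin n → Bool) : ℝ :=
  (g (Function.update x i true) - g (Function.update x i false)) / 2

/-- `p`-smoothed version `f̃(x) = E_{y ∼_p x}[f(y)]` of a Boolean function `f`. -/
def smooth (n : ℕ) (p : ℝ) (f : (Fin n → Bool) → Bool) (x : Fin n → Bool) : ℝ :=
  (∑ r : Fin n → Bool, ∑ z : Fin n → Bool, wt n p r * toR (f (noisy n x r z))) / 2 ^ n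

/-- Fourier coefficient `f̂(S) = E[f(x) · χ_S(x)]`. -/
def fourier (n : ℕ) (f : (Fin n → Bool) → Bool) (S : Finset (Fin n)) : ℝ :=
  avg n fun x => toR (f x) * ∏ i ∈ S, toR (x i)

/-- Total influence `Inf(g) = Σ_i Pr[g(x) ≠ g(x^{⊕i})]`. -/
def totalInf (n : ℕ) (g : (Fin n → Bool) → Bool) : ℝ :=
  ∑ i : Fin n, avg n fun x => if g x = g (Function.update x i (!x i)) then 0 else 1

/-- Decision trees over `{-1,1}^n`. -/
inductive DTree (n : ℕ) where
  | leaf : Bool → DTree n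
  | node : Fin n → DTree n → DTree n → DTree n

namespace DTree

def eval {n : ℕ} : DTree n → (Fin n → Bool) → Bool
  | .leaf b, _ => b
  | .node i l r, x => if x i then eval r x else eval l x

/-- Number of leaves (the size of the tree). -/
def leaves {n : ℕ} : DTree n → ℕ
  | .leaf _ => 1
  | .node _ l r => leaves l + leaves r

/-- Depth of the leaf reached by input `x`. -/
def depthOn {n : ℕ} : DTree n → (Fin n → Bool) → ℕ
  | .leaf _, _ => 0
  | .node i l r, x => (if x i then depthOn r x else depthOn l x) + 1

/-- Whether the tree queries variable `i` on input `x`. -/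
def queries {n : ℕ} : DTree n → (Fin n → Bool) → Fin n → Bool
  | .leaf _, _, _ => false
  | .node j l r, x, i => (i == j) || (if x j then queries r x i else queries l x i)

/-- The tree never re-queries a variable already queried on the path
(given the set `s` of forbidden variables). -/
def noRepeat {n : ℕ} : DTree n → Finset (Fin n) → Prop
  | .leaf _, _ => True
  | .node i l r, s => i ∉ s ∧ noRepeat l (insert i s) ∧ noRepeat r (insert i s)

def depth {n : ℕ} : DTree n → ℕ
  | .leaf _ => 0
  | .node _ l r => max (depth l) (depth r) + 1

end DTree

/-- `opt_s(g)`: distance of `g` to the closest decision tree of size at most `s`. -/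
def opt (n : ℕ) (s : ℕ) (g : (Fin n → Bool) → Bool) : ℝ :=
  sInf {e : ℝ | ∃ T : DTree n, T.leaves ≤ s ∧ distB n g T.eval = e}

/-!
Write `h = toR ∘ f` as `h = A + x_i · D`, where `A` is the average of `h` over coordinate `i`
and `D = D_i h`; neither depends on `x_i`. The noise operator `T` preserves functions not
depending on `x_i` and multiplies such functions by `x_i` with a factor `1 - p`, while
`E[x_i · k] = 0` for every such `k`. Hence `Stab_p(h) = Stab_p(A) + (1 - p) Stab_p(D)`, whereas
the two restrictions `A ± D` have average stability `Stab_p(A) + Stab_p(D)`, so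
`Score_i(f, p) = (p/2) Stab_p(D)`. On the other side
`f̃(x) - f̃(x^{i←b}) = (1 - p)(x_i - b) · T D(x)`, so the left-hand side is `(1 - p) E|T D|`, and
`(E|T D|)² ≤ E[(T D)²] ≤ E[D · T D] = Stab_p(D)` by Cauchy–Schwarz and by Jensen over the noise
pattern, each resampling being an orthogonal projection.
-/

section

variable {n : ℕ}

def IgnoresCoord (i : Fin n) (g : (Fin n → Bool) → ℝ) : Prop :=
  ∀ x b, g (Function.update x i b) = g x

lemma toR_mul_self (b : Bool) : toR b * toR b = 1 := by
  cases b <;> norm_num [toR]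

lemma flip_involutive (i : Fin n) :
    Function.Involutive fun x : Fin n → Bool => Function.update x i (!x i) := by
  intro x
  simp [Function.update_idem]

/-- Flipping coordinate `i` permutes the cube and fixes `K`. -/
lemma sum_mul_of_ignoresCoord {i : Fin n} {K : (Fin n → Bool) → ℝ} (hK : IgnoresCoord i K)
    (φ : Bool → ℝ) :
    ∑ x, φ (x i) * K x = (φ true + φ false) / 2 * ∑ x, K x := by
  have hflip : ∑ x, φ (x i) * K x = ∑ x, φ (!x i) * K x := by
    rw [← Equiv.sum_comp (Function.Involutive.toPerm _ (flip_involutive i))]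
    exact Finset.sum_congr rfl fun x _ => by simp [hK x]
  have hpair : ∀ b, φ b + φ (!b) = φ true + φ false := by
    intro b; cases b <;> simp [add_comm]
  have : 2 * ∑ x, φ (x i) * K x = (φ true + φ false) * ∑ x, K x := by
    rw [two_mul]
    nth_rewrite 2 [hflip]
    simp only [← Finset.sum_add_distrib, ← add_mul, hpair, Finset.mul_sum]
  linarith

lemma sum_toR_mul_of_ignoresCoord {i : Fin n} {K : (Fin n → Bool) → ℝ}
    (hK : IgnoresCoord i K) : ∑ x, toR (x i) * K x = 0 := by
  rw [sum_mul_of_ignoresCoord hK toR]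
  simp [toR]

lemma noisy_noisy (x r z z' : Fin n → Bool) :
    noisy n (noisy n x r z) r z' = noisy n x r z' := by
  funext j; by_cases h : r j <;> simp [noisy, h]

lemma noisy_update_input (x r z : Fin n → Bool) (i : Fin n) (b : Bool) :
    noisy n (Function.update x i b) r z
      = Function.update (noisy n x r z) i (if r i then z i else b) := by
  funext j
  rcases eq_or_ne j i with rfl | hj
  · by_cases h : r j <;> simp [noisy, h]
  · simp [noisy, Function.update_of_ne hj]

lemma noisy_update_fresh (x r z : Fin n → Bool) (i : Fin n) (c : Bool) :
    noisy n x r (Function.update z i c)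
      = Function.update (noisy n x r z) i (if r i then c else x i) := by
  funext j
  rcases eq_or_ne j i with rfl | hj
  · by_cases h : r j <;> simp [noisy, h]
  · simp [noisy, Function.update_of_ne hj]

lemma noisy_update_pattern (x r z : Fin n → Bool) (i : Fin n) (b : Bool) :
    noisy n x (Function.update r i b) z
      = Function.update (noisy n x r z) i (if b then z i else x i) := by
  funext j
  rcases eq_or_ne j i with rfl | hj
  · by_cases h : b <;> simp [noisy, h]
  · simp [noisy, Function.update_of_ne hj]

lemma wt_nonneg {p : ℝ} (hp0 : 0 ≤ p) (hp1 : p ≤ 1) (r : Fin n → Bool) : 0 ≤ wt n p r :=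
  Finset.prod_nonneg fun j _ => by split_ifs <;> linarith

lemma sum_wt (p : ℝ) : ∑ r, wt n p r = 1 := by
  simp only [wt]
  rw [← Fintype.prod_sum fun (_ : Fin n) (b : Bool) => if b then p else 1 - p]
  simp

/-- The bit `r i` of the rerandomization pattern is `true` with probability `p`,
independently of the other bits. -/
lemma sum_wt_mul_of_ignoresCoord (p : ℝ) {i : Fin n} {H : (Fin n → Bool) → ℝ}
    (hH : IgnoresCoord i H) (φ : Bool → ℝ) :
    ∑ r, wt n p r * (φ (r i) * H r) = (p * φ true + (1 - p) * φ false) * ∑ r, wt n p r * H r := by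
  set c : Bool → ℝ := fun b => if b then p else 1 - p
  set w : (Fin n → Bool) → ℝ := fun r => ∏ j ∈ Finset.univ.erase i, c (r j)
  have hwt : ∀ r, wt n p r = c (r i) * w r := fun r =>
    (Finset.mul_prod_erase Finset.univ (fun j => c (r j)) (Finset.mem_univ i)).symm
  have hwH : IgnoresCoord i fun r => w r * H r := by
    intro r b
    simp only [hH r b, w]
    congr 1
    exact Finset.prod_congr rfl fun j hj => by
      rw [Function.update_of_ne (Finset.ne_of_mem_erase hj)]
  have h1 : ∑ r, wt n p r * (φ (r i) * H r) = ∑ r, c (r i) * φ (r i) * (w r * H r) :=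
    Finset.sum_congr rfl fun r _ => by rw [hwt]; ring
  have h2 : ∑ r, wt n p r * H r = ∑ r, c (r i) * (w r * H r) :=
    Finset.sum_congr rfl fun r _ => by rw [hwt]; ring
  rw [h1, h2, sum_mul_of_ignoresCoord hwH fun b => c b * φ b, sum_mul_of_ignoresCoord hwH c]
  simp only [c, if_true, Bool.false_eq_true, if_false]
  ring

/-- The conditional expectation of `g` given the coordinates that `r` does not rerandomize. -/
def resample (r : Fin n → Bool) (g : (Fin n → Bool) → ℝ) (x : Fin n → Bool) : ℝ :=
  avg n fun z => g (noisy n x r z)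

def noiseOp (p : ℝ) (g : (Fin n → Bool) → ℝ) (x : Fin n → Bool) : ℝ :=
  ∑ r, wt n p r * resample r g x

lemma smooth_eq_noiseOp (p : ℝ) (f : (Fin n → Bool) → Bool) :
    smooth n p f = noiseOp p fun x => toR (f x) := by
  funext x
  simp only [smooth, noiseOp, resample, avg, Finset.sum_div, Finset.mul_sum, mul_div_assoc]

lemma noiseOp_add (p : ℝ) (g h : (Fin n → Bool) → ℝ) (x : Fin n → Bool) :
    noiseOp p (fun y => g y + h y) x = noiseOp p g x + noiseOp p h x := by
  simp only [noiseOp, resample, avg, Finset.sum_add_distrib, add_div, mul_add]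

lemma noiseOp_sub (p : ℝ) (g h : (Fin n → Bool) → ℝ) (x : Fin n → Bool) :
    noiseOp p (fun y => g y - h y) x = noiseOp p g x - noiseOp p h x := by
  simp only [noiseOp, resample, avg, Finset.sum_sub_distrib, sub_div, mul_sub]

lemma noisy_swap_involutive (r : Fin n → Bool) :
    Function.Involutive fun q : (Fin n → Bool) × (Fin n → Bool) =>
      (noisy n q.1 r q.2, noisy n q.2 r q.1) := by
  rintro ⟨x, z⟩
  simp only [Prod.mk.injEq]
  constructor <;> funext j <;> by_cases h : r j <;> simp [noisy, h]

lemma sum_sum_noisy (r : Fin n → Bool) (F : (Fin n → Bool) → ℝ) :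
    ∑ x, ∑ z, F (noisy n x r z) = 2 ^ n * ∑ x, F x := by
  have hswap := Equiv.sum_comp (Function.Involutive.toPerm _ (noisy_swap_involutive r))
    fun q => F q.1
  simp only [Function.Involutive.coe_toPerm] at hswap
  rw [← Fintype.sum_prod_type' fun x z => F (noisy n x r z), hswap]
  simp [Fintype.sum_prod_type, Finset.mul_sum]

lemma resample_noisy (r : Fin n → Bool) (g : (Fin n → Bool) → ℝ) (x z : Fin n → Bool) :
    resample r g (noisy n x r z) = resample r g x := by
  simp only [resample, noisy_noisy]

/-- `resample r` is an orthogonal projection. -/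
lemma sum_sq_resample (r : Fin n → Bool) (g : (Fin n → Bool) → ℝ) :
    ∑ x, resample r g x ^ 2 = ∑ x, g x * resample r g x := by
  have h2n : (2 : ℝ) ^ n ≠ 0 := by positivity
  calc ∑ x, resample r g x ^ 2 = (∑ x, ∑ z, resample r g x * g (noisy n x r z)) / 2 ^ n := by
        simp only [sq, resample, avg, Finset.sum_div, Finset.mul_sum, mul_div_assoc]
    _ = (∑ x, ∑ z, (fun y => g y * resample r g y) (noisy n x r z)) / 2 ^ n := by
        simp only [resample_noisy, mul_comm]
    _ = ∑ x, g x * resample r g x := by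
        rw [sum_sum_noisy r fun y => g y * resample r g y]
        field_simp

/-- Jensen's inequality over the noise pattern, then `sum_sq_resample`. -/
lemma sum_sq_noiseOp_le {p : ℝ} (hp0 : 0 ≤ p) (hp1 : p ≤ 1) (g : (Fin n → Bool) → ℝ) :
    ∑ x, noiseOp p g x ^ 2 ≤ ∑ x, g x * noiseOp p g x := by
  have hjensen : ∀ x, noiseOp p g x ^ 2 ≤ ∑ r, wt n p r * resample r g x ^ 2 := fun x =>
    (even_two.convexOn_pow (𝕜 := ℝ)).map_sum_le (fun r _ => wt_nonneg hp0 hp1 r) (sum_wt p)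
      (fun _ _ => Set.mem_univ _)
  calc ∑ x, noiseOp p g x ^ 2 ≤ ∑ x, ∑ r, wt n p r * resample r g x ^ 2 :=
        Finset.sum_le_sum fun x _ => hjensen x
    _ = ∑ r, wt n p r * ∑ x, g x * resample r g x := by
        rw [Finset.sum_comm]
        simp only [← Finset.mul_sum, sum_sq_resample]
    _ = ∑ x, g x * noiseOp p g x := by
        simp only [noiseOp, Finset.mul_sum]
        rw [Finset.sum_comm]
        exact Finset.sum_congr rfl fun _ _ => Finset.sum_congr rfl fun _ _ => by ring

variable {i : Fin n} {g : (Fin n → Bool) → ℝ}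

lemma IgnoresCoord.resample (hg : IgnoresCoord i g) (r : Fin n → Bool) :
    IgnoresCoord i (resample r g) := by
  intro x b
  simp only [DTR.resample, noisy_update_input, hg _ _]

lemma ignoresCoord_resample_pattern (hg : IgnoresCoord i g) (x : Fin n → Bool) :
    IgnoresCoord i fun r => resample r g x := by
  intro r b
  simp only [DTR.resample, noisy_update_pattern, hg _ _]

lemma IgnoresCoord.noiseOp (hg : IgnoresCoord i g) (p : ℝ) : IgnoresCoord i (noiseOp p g) := by
  intro x b
  simp only [DTR.noiseOp, hg.resample _ x b]

lemma resample_toR_mul (hg : IgnoresCoord i g) (r x : Fin n → Bool) :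
    resample r (fun y => toR (y i) * g y) x = (if r i then 0 else toR (x i)) * resample r g x := by
  by_cases hri : r i
  · have hK : IgnoresCoord i fun z => g (noisy n x r z) := fun z c => by
      simp only [noisy_update_fresh, hg _ _]
    simp [resample, avg, noisy, hri, sum_toR_mul_of_ignoresCoord hK]
  · simp [resample, avg, noisy, hri, ← Finset.mul_sum, mul_div_assoc]

lemma noiseOp_toR_mul (hg : IgnoresCoord i g) (p : ℝ) (x : Fin n → Bool) :
    noiseOp p (fun y => toR (y i) * g y) x = (1 - p) * toR (x i) * noiseOp p g x := by
  calc noiseOp p (fun y => toR (y i) * g y) x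
      = ∑ r, wt n p r * ((fun b : Bool => if b then 0 else toR (x i)) (r i) * resample r g x) := by
        simp only [noiseOp, resample_toR_mul hg]
    _ = (1 - p) * toR (x i) * noiseOp p g x := by
        rw [sum_wt_mul_of_ignoresCoord p (ignoresCoord_resample_pattern hg x)
          fun b => if b then 0 else toR (x i)]
        simp [noiseOp]

def coordAvg (g : (Fin n → Bool) → ℝ) (i : Fin n) (x : Fin n → Bool) : ℝ :=
  (g (Function.update x i true) + g (Function.update x i false)) / 2

lemma ignoresCoord_coordAvg : IgnoresCoord i (coordAvg g i) := by
  intro x b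
  simp [coordAvg]

lemma ignoresCoord_Dder : IgnoresCoord i (Dder n g i) := by
  intro x b
  simp [Dder]

lemma apply_update_eq_coordAvg_add (g : (Fin n → Bool) → ℝ) (i : Fin n) (x : Fin n → Bool)
    (b : Bool) :
    g (Function.update x i b) = coordAvg g i x + toR b * Dder n g i x := by
  cases b <;> simp only [coordAvg, Dder, toR, if_true, Bool.false_eq_true, if_false] <;> ring

lemma eq_coordAvg_add (g : (Fin n → Bool) → ℝ) (i : Fin n) (x : Fin n → Bool) :
    g x = coordAvg g i x + toR (x i) * Dder n g i x := by
  conv_lhs => rw [← Function.update_eq_self i x]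
  exact apply_update_eq_coordAvg_add g i x (x i)

def noiseStab (p : ℝ) (g : (Fin n → Bool) → ℝ) : ℝ :=
  avg n fun x => g x * noiseOp p g x

lemma NS_eq_noiseStab (p : ℝ) (f : (Fin n → Bool) → Bool) :
    NS n p f = (1 - noiseStab p fun x => toR (f x)) / 2 := by
  set h : (Fin n → Bool) → ℝ := fun x => toR (f x)
  have h2n : (2 : ℝ) ^ n ≠ 0 := by positivity
  have hind : ∀ a b : Bool, (if a = b then (0 : ℝ) else 1) = (1 - toR a * toR b) / 2 := by
    intro a b; cases a <;> cases b <;> norm_num [toR]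
  have hcount : ∑ r, ∑ _z : Fin n → Bool, wt n p r = 2 ^ n := by
    rw [Finset.sum_comm]
    simp [sum_wt]
  have hx : ∀ x, ∑ r, ∑ z, wt n p r * (if f x = f (noisy n x r z) then 0 else 1)
      = 2 ^ n / 2 * (1 - h x * noiseOp p h x) := by
    intro x
    have hpt : ∀ r z, wt n p r * (if f x = f (noisy n x r z) then 0 else 1)
        = wt n p r / 2 - h x / 2 * (wt n p r * h (noisy n x r z)) := by
      intro r z; rw [hind]; ring
    simp only [hpt, Finset.sum_sub_distrib, ← Finset.mul_sum, ← Finset.sum_div, hcount,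
      noiseOp, resample, avg, ← mul_div_assoc]
    field_simp
  rw [NS, Finset.sum_congr rfl fun x _ => hx x, ← Finset.mul_sum, Finset.sum_sub_distrib,
    noiseStab, avg]
  simp only [Finset.sum_const, Finset.card_univ, Fintype.card_pi, Fintype.card_bool,
    Finset.prod_const, Fintype.card_fin, nsmul_eq_mul, Nat.cast_pow, Nat.cast_ofNat, mul_one]
  field_simp

lemma noiseStab_add_toR_mul {E D : (Fin n → Bool) → ℝ} (hE : IgnoresCoord i E)
    (hD : IgnoresCoord i D) (p : ℝ) :
    noiseStab p (fun x => E x + toR (x i) * D x) = noiseStab p E + (1 - p) * noiseStab p D := by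
  set K : (Fin n → Bool) → ℝ := fun x => (1 - p) * E x * noiseOp p D x + D x * noiseOp p E x
  have hK : IgnoresCoord i K := fun x b => by
    simp only [K, hE x b, hD x b, hE.noiseOp p x b, hD.noiseOp p x b]
  have hpt : ∀ x, (E x + toR (x i) * D x) * noiseOp p (fun y => E y + toR (y i) * D y) x
      = E x * noiseOp p E x + (1 - p) * (D x * noiseOp p D x) + toR (x i) * K x := by
    intro x
    rw [noiseOp_add, noiseOp_toR_mul hD]
    linear_combination (1 - p) * D x * noiseOp p D x * toR_mul_self (x i)
  simp only [noiseStab, avg, hpt, Finset.sum_add_distrib, sum_toR_mul_of_ignoresCoord hK,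
    ← Finset.mul_sum]
  ring

lemma noiseStab_add_add_noiseStab_sub (p : ℝ) (E D : (Fin n → Bool) → ℝ) :
    noiseStab p (fun x => E x + D x) + noiseStab p (fun x => E x - D x)
      = 2 * (noiseStab p E + noiseStab p D) := by
  have hpt : ∀ x, (E x + D x) * (noiseOp p E x + noiseOp p D x)
      + (E x - D x) * (noiseOp p E x - noiseOp p D x)
      = 2 * (E x * noiseOp p E x + D x * noiseOp p D x) := fun x => by ring
  simp only [noiseStab, avg, noiseOp_add, noiseOp_sub, ← add_div, ← Finset.sum_add_distrib, hpt,
    ← Finset.mul_sum]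
  ring

lemma score_eq_noiseStab_Dder (p : ℝ) (f : (Fin n → Bool) → Bool) (i : Fin n) :
    score n p f i = p / 2 * noiseStab p (Dder n (fun x => toR (f x)) i) := by
  set h : (Fin n → Bool) → ℝ := fun x => toR (f x)
  have hf : (fun x => toR (f x)) = fun x => coordAvg h i x + toR (x i) * Dder n h i x :=
    funext fun x => eq_coordAvg_add h i x
  have hrestr : ∀ b x, toR (restr n f i b x) = coordAvg h i x + toR b * Dder n h i x :=
    fun b x => apply_update_eq_coordAvg_add h i x b
  have htrue : (fun x => toR (restr n f i true x)) = fun x => coordAvg h i x + Dder n h i x :=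
    funext fun x => by rw [hrestr]; simp [toR]
  have hfalse : (fun x => toR (restr n f i false x)) = fun x => coordAvg h i x - Dder n h i x :=
    funext fun x => by rw [hrestr]; simp [toR, sub_eq_add_neg]
  rw [score, NS_eq_noiseStab, NS_eq_noiseStab, NS_eq_noiseStab, hf, htrue, hfalse,
    noiseStab_add_toR_mul ignoresCoord_coordAvg ignoresCoord_Dder]
  linear_combination (1 / 4 : ℝ) * noiseStab_add_add_noiseStab_sub p (coordAvg h i) (Dder n h i)

lemma smooth_sub_smooth_update (p : ℝ) (f : (Fin n → Bool) → Bool) (i : Fin n)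
    (x : Fin n → Bool) (b : Bool) :
    smooth n p f x - smooth n p f (Function.update x i b)
      = (1 - p) * (toR (x i) - toR b) * noiseOp p (Dder n (fun y => toR (f y)) i) x := by
  set h : (Fin n → Bool) → ℝ := fun y => toR (f y)
  have hT : ∀ y, smooth n p f y
      = noiseOp p (coordAvg h i) y + (1 - p) * toR (y i) * noiseOp p (Dder n h i) y := by
    intro y
    rw [smooth_eq_noiseOp, ← noiseOp_toR_mul ignoresCoord_Dder, ← noiseOp_add]
    congr 1
    exact funext (eq_coordAvg_add h i)
  rw [hT, hT, ignoresCoord_coordAvg.noiseOp p x b, ignoresCoord_Dder.noiseOp p x b]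
  simp only [Function.update_self]
  ring

lemma sum_abs_toR_sub (a : Bool) : ∑ b : Bool, |toR a - toR b| = 2 := by
  cases a <;> norm_num [toR]

lemma avg_abs_le_sqrt_avg_sq (g : (Fin n → Bool) → ℝ) :
    avg n (fun x => |g x|) ≤ Real.sqrt (avg n fun x => g x ^ 2) := by
  have hcs : (∑ x, |g x|) ^ 2 ≤ 2 ^ n * ∑ x, g x ^ 2 := by
    simpa using sq_sum_le_card_mul_sum_sq (s := Finset.univ) (f := fun x => |g x|)
  apply Real.le_sqrt_of_sq_le
  rw [avg, avg, div_pow, div_le_div_iff₀ (by positivity) (by positivity)]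
  have := mul_le_mul_of_nonneg_right hcs (by positivity : (0 : ℝ) ≤ 2 ^ n)
  linarith

lemma avg_sq_noiseOp_le_noiseStab {p : ℝ} (hp0 : 0 ≤ p) (hp1 : p ≤ 1) (g : (Fin n → Bool) → ℝ) :
    avg n (fun x => noiseOp p g x ^ 2) ≤ noiseStab p g :=
  div_le_div_of_nonneg_right (sum_sq_noiseOp_le hp0 hp1 g) (by positivity)

end

/-- `E_x[|f̃(x) − f̃(x^{∼i})|] ≤ sqrt(4·Score_i(f,p)/p)`, where
`x^{∼i}` rerandomizes coordinate `i`. -/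
theorem stmt9 (n : ℕ) (p : ℝ) (hp0 : 0 < p) (hp1 : p < 1)
    (f : (Fin n → Bool) → Bool) (i : Fin n) :
    (∑ x : Fin n → Bool, ∑ b : Bool,
        |smooth n p f x - smooth n p f (Function.update x i b)|) / (2 ^ n * 2) ≤
      Real.sqrt (4 * score n p f i / p) := by
  set D := Dder n (fun y => toR (f y)) i
  have hstab := avg_sq_noiseOp_le_noiseStab hp0.le hp1.le D
  have hstab_nonneg : 0 ≤ noiseStab p D :=
    (by unfold avg; positivity : 0 ≤ avg n fun x => noiseOp p D x ^ 2).trans hstab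
  have hlhs : (∑ x : Fin n → Bool, ∑ b : Bool,
        |smooth n p f x - smooth n p f (Function.update x i b)|) / (2 ^ n * 2)
      = (1 - p) * avg n fun x => |noiseOp p D x| := by
    simp only [smooth_sub_smooth_update, abs_mul, abs_of_pos (sub_pos.2 hp1), ← Finset.sum_mul,
      ← Finset.mul_sum, sum_abs_toR_sub, avg]
    field_simp
    rfl
  rw [hlhs, score_eq_noiseStab_Dder]
  calc (1 - p) * avg n (fun x => |noiseOp p D x|) ≤ avg n fun x => |noiseOp p D x| :=
        mul_le_of_le_one_left (by unfold avg; positivity) (by linarith)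
    _ ≤ Real.sqrt (avg n fun x => noiseOp p D x ^ 2) := avg_abs_le_sqrt_avg_sq _
    _ ≤ Real.sqrt (noiseStab p D) := Real.sqrt_le_sqrt hstab
    _ ≤ Real.sqrt (4 * (p / 2 * noiseStab p D) / p) :=
        Real.sqrt_le_sqrt (by field_simp; linarith)

end

end DTR
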